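/- arXiv:1207.6778 — 2 statements merged into one kernel-verified Lean document; each statement's English description precedes it below -/
import Mathlib

section
/- Any set of 5 points in the plane in general position (no three collinear) contains 4 points that are the vertices of a convex quadrilateral. -/
open scoped Classical
noncomputable section

/-- Points in the plane. -/
abbrev Pt := ℝ × ℝ

/-- Signed area determinant of the triple (p, q, r). -/
def det (p q r : Pt) : ℝ := (q.1 - p.1) * (r.2 - p.2) - (q.2 - p.2) * (r.1 - p.1)

/-- A finite point set is in general position if no three distinct points are collinear. -/
def GenPos (S : Finset Pt) : Prop :=
  ∀ p ∈ S, ∀ q ∈ S, ∀ r ∈ S, p ≠ q → p ≠ r → q ≠ r → ¬ Collinear ℝ ({p, q, r} : Set Pt)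

/-- A finite point set is in convex position if no point lies in the
convex hull of the others. -/
def ConvexPos (S : Finset Pt) : Prop :=
  ∀ p ∈ S, p ∉ convexHull ℝ ((S.erase p : Finset Pt) : Set Pt)

/-- The vertices of the convex hull of a finite point set. -/
def hullVerts (S : Finset Pt) : Finset Pt :=
  S.filter (fun p => p ∉ convexHull ℝ ((S.erase p : Finset Pt) : Set Pt))

/-- `S` is an empty convex pentagon of the point set `P`. -/
def EmptyConvexPentagon (P S : Finset Pt) : Prop :=
  S ⊆ P ∧ S.card = 5 ∧ ConvexPos S ∧
    ∀ p ∈ P, p ∉ S → p ∉ interior (convexHull ℝ (S : Set Pt))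

/-- Type-1 beam `a : bc`: the convex cone with apex `a` spanned by the rays from `a`
through `b` and through `c`, minus the triangle `abc`. -/
def beam1 (a b c : Pt) : Set Pt :=
  {x | (∃ s t : ℝ, 0 ≤ s ∧ 0 ≤ t ∧ x = a + s • (b - a) + t • (c - a)) ∧
       x ∉ convexHull ℝ ({a, b, c} : Set Pt)}

/-- Type-2 beam `pq : rs`: the convex region bounded by the segment `pq`, the ray
from `p` through `s` and the ray from `q` through `r`, minus the quadrilateral `pqrs`. -/
def beam2 (p q r s : Pt) : Set Pt :=
  {x | (∃ y ∈ segment ℝ p q, ∃ u v : ℝ, 0 ≤ u ∧ 0 ≤ v ∧ x = y + u • (s - p) + v • (r - q)) ∧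
       x ∉ convexHull ℝ ({p, q, r, s} : Set Pt)}

/-- The O-region of triangle `abc` opposite the vertex `a`: points separated from `a`
by line `bc`, on the same side of line `ac` as `b`, and on the same side of line `ab` as `c`. -/
def ORegionOpp (a b c : Pt) : Set Pt :=
  {x | det b c x * det b c a < 0 ∧ det a c x * det a c b > 0 ∧ det a b x * det a b c > 0}

/-- The I-region of triangle (or quadrilateral) at vertex `a` relative to the remaining
vertex set `R`: points `x` such that `a` lies strictly inside the convex hull of `{x} ∪ R`. -/
def IRegion (a : Pt) (R : Set Pt) : Set Pt :=
  {x | a ∈ interior (convexHull ℝ (insert x R))}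

/-- A convex quadrilateral with vertices `a b c d` in this cyclic order. -/
def CyclicQuad (a b c d : Pt) : Prop :=
  ConvexPos ({a, b, c, d} : Finset Pt) ∧ ({a, b, c, d} : Finset Pt).card = 4 ∧
    det a c b * det a c d < 0 ∧ det b d a * det b d c < 0


lemma pt_vadd_ext {x v p : Pt} {t : ℝ} (h1 : x.1 = t * v.1 + p.1) (h2 : x.2 = t * v.2 + p.2) :
    x = t • v +ᵥ p := by
  apply Prod.ext
  · show x.1 = (t • v +ᵥ p).1; simpa using h1
  · show x.2 = (t • v +ᵥ p).2; simpa using h2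

lemma collinear_of_det_eq_zero {p q r : Pt} (h : det p q r = 0) :
    Collinear ℝ ({p, q, r} : Set Pt) := by
  by_cases hpq : p = q
  · subst hpq
    have : ({p, p, r} : Set Pt) = {p, r} := by simp
    rw [this]
    exact collinear_pair ℝ p r
  · have hmem : p ∈ ({p, q, r} : Set Pt) := by simp
    rw [collinear_iff_of_mem hmem]
    refine ⟨q - p, ?_⟩
    intro x hx
    simp only [Set.mem_insert_iff, Set.mem_singleton_iff] at hx
    rcases hx with rfl | rfl | rfl
    · exact ⟨0, by simpa using pt_vadd_ext (by ring) (by ring)⟩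
    · exact ⟨1, pt_vadd_ext (by simp) (by simp)⟩
    · unfold det at h
      by_cases h1 : q.1 - p.1 ≠ 0
      · refine ⟨(x.1 - p.1) / (q.1 - p.1), pt_vadd_ext ?_ ?_⟩
        · show x.1 = _ * (q - p).1 + p.1
          simp only [Prod.fst_sub]
          field_simp
          ring
        · show x.2 = _ * (q - p).2 + p.2
          simp only [Prod.snd_sub, Prod.fst_sub] at *
          field_simp
          nlinarith [h]
      · push_neg at h1
        have h2 : q.2 - p.2 ≠ 0 := by
          intro h2
          exact hpq (Prod.ext (by linarith) (by linarith))
        have h3 : (q.2 - p.2) * (x.1 - p.1) = 0 := by rw [h1] at h; linarith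
        have h4 : x.1 - p.1 = 0 := by
          rcases mul_eq_zero.1 h3 with h | h
          · exact absurd h h2
          · exact h
        refine ⟨(x.2 - p.2) / (q.2 - p.2), pt_vadd_ext ?_ ?_⟩
        · show x.1 = _ * (q - p).1 + p.1
          simp only [Prod.fst_sub]
          rw [h1]; ring_nf; linarith
        · show x.2 = _ * (q - p).2 + p.2
          simp only [Prod.snd_sub]
          field_simp
          ring


lemma mem_hull3 {p q r x : Pt} :
    x ∈ convexHull ℝ ({p, q, r} : Set Pt) ↔
    ∃ a b c : ℝ, 0 ≤ a ∧ 0 ≤ b ∧ 0 ≤ c ∧ a + b + c = 1 ∧ a • p + b • q + c • r = x := by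
  constructor
  · intro hx
    rw [show ({p,q,r} : Set Pt) = insert p {q,r} from rfl,
      convexHull_insert ⟨q, by simp⟩, convexJoin_singleton_left] at hx
    simp only [Set.mem_iUnion] at hx
    obtain ⟨z, hz, hxz⟩ := hx
    rw [convexHull_pair] at hz
    obtain ⟨b, c, hb, hc, hbc, hz⟩ := hz
    obtain ⟨a, t, ha, ht, hat, hx⟩ := hxz
    refine ⟨a, t*b, t*c, ha, by positivity, by positivity, by nlinarith, ?_⟩
    rw [← hx, ← hz]
    module
  · rintro ⟨a, b, c, ha, hb, hc, habc, rfl⟩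
    by_cases h : b + c = 0
    · have hb0 : b = 0 := by linarith
      have hc0 : c = 0 := by linarith
      have : a = 1 := by linarith
      subst hb0; subst hc0; subst this
      simpa using subset_convexHull ℝ ({p,q,r} : Set Pt) (by simp)
    · have hbc : 0 < b + c := lt_of_le_of_ne (by linarith) (Ne.symm h)
      have hz : (b/(b+c)) • q + (c/(b+c)) • r ∈ convexHull ℝ ({p,q,r} : Set Pt) := by
        apply (convex_convexHull ℝ _) (subset_convexHull ℝ _ (by simp : q ∈ _))
          (subset_convexHull ℝ _ (by simp : r ∈ _)) (by positivity) (by positivity)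
          (by field_simp)
      have := (convex_convexHull ℝ ({p,q,r} : Set Pt))
        (subset_convexHull ℝ _ (by simp : p ∈ _)) hz ha (le_of_lt hbc) (by linarith)
      convert this using 1
      match_scalars <;> field_simp


lemma det_swap23 (p q r : Pt) : det p r q = - det p q r := by unfold det; ring
lemma det_rot (p q r : Pt) : det q r p = det p q r := by unfold det; ring
lemma det_self12 (p r : Pt) : det p p r = 0 := by unfold det; ring
lemma det_self13 (p q : Pt) : det p q p = 0 := by unfold det; ring
lemma det_self23 (p q : Pt) : det p q q = 0 := by unfold det; ring

lemma combo_comp {a b c : ℝ} {p q r s : Pt} (h : a • p + b • q + c • r = s) :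
    a * p.1 + b * q.1 + c * r.1 = s.1 ∧ a * p.2 + b * q.2 + c * r.2 = s.2 := by
  constructor
  · rw [← h]; simp [Prod.fst_add]
  · rw [← h]; simp [Prod.snd_add]

lemma det_combo {a b c : ℝ} {p q x y z w : Pt} (habc : a + b + c = 1)
    (h : a • x + b • y + c • z = w) :
    det p q w = a * det p q x + b * det p q y + c * det p q z := by
  obtain ⟨h1, h2⟩ := combo_comp h
  unfold det
  rw [← h1, ← h2]
  have : c = 1 - a - b := by linarith
  subst this
  ring

lemma bary_unique {p q r : Pt} (hD : det p q r ≠ 0) {a b c : ℝ} (habc : a + b + c = 0)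
    (h : a • p + b • q + c • r = (0 : Pt)) : a = 0 ∧ b = 0 ∧ c = 0 := by
  obtain ⟨h1, h2⟩ := combo_comp h
  simp only [Prod.fst_zero, Prod.snd_zero] at h1 h2
  have hc : c = -a - b := by linarith
  subst hc
  have ha : a * det p q r = 0 := by unfold det; linear_combination (r.1 - q.1) * h2 - (r.2 - q.2) * h1
  have hb : b * det p q r = 0 := by unfold det; linear_combination (p.1 - r.1) * h2 - (p.2 - r.2) * h1
  have ha0 : a = 0 := by rcases mul_eq_zero.1 ha with h | h; exact h; exact absurd h hD
  have hb0 : b = 0 := by rcases mul_eq_zero.1 hb with h | h; exact h; exact absurd h hD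
  exact ⟨ha0, hb0, by linarith⟩

/-- `d` is strictly inside triangle `p q r`. -/
def SIn (d p q r : Pt) : Prop :=
  ∃ a b c : ℝ, 0 < a ∧ 0 < b ∧ 0 < c ∧ a + b + c = 1 ∧ a • p + b • q + c • r = d

lemma SIn_swap23 {d p q r : Pt} (h : SIn d p q r) : SIn d p r q := by
  obtain ⟨a, b, c, ha, hb, hc, habc, h⟩ := h
  exact ⟨a, c, b, ha, hc, hb, by linarith, by rw [← h]; module⟩

lemma SIn_rot {d p q r : Pt} (h : SIn d p q r) : SIn d q r p := by
  obtain ⟨a, b, c, ha, hb, hc, habc, h⟩ := h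
  exact ⟨b, c, a, hb, hc, ha, by linarith, by rw [← h]; module⟩

lemma SIn_swap12 {d p q r : Pt} (h : SIn d p q r) : SIn d q p r :=
  SIn_swap23 (SIn_rot h)

/-- substitution: d inside (p,q,r) and r inside (p,q,e) implies d inside (p,q,e) -/
lemma SIn_subst {d p q r e : Pt} (hd : SIn d p q r) (hr : SIn r p q e) : SIn d p q e := by
  obtain ⟨a, b, c, ha, hb, hc, habc, hv⟩ := hd
  obtain ⟨x, y, z, hx, hy, hz, hxyz, hw⟩ := hr
  refine ⟨a + c*x, b + c*y, c*z, by positivity, by positivity, by positivity, by nlinarith, ?_⟩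
  rw [← hv, ← hw]
  module


/-- Line lemma: if x and y are strictly on the same side of line de, then
d is not in the hull of {x, y, e}. -/
lemma line_not_mem {d e x y : Pt} (hde : d ≠ e) (hxy : det d e x * det d e y > 0) :
    d ∉ convexHull ℝ ({x, y, e} : Set Pt) := by
  intro hmem
  rw [mem_hull3] at hmem
  obtain ⟨a, b, c, ha, hb, hc, habc, hv⟩ := hmem
  have hd : det d e d = a * det d e x + b * det d e y + c * det d e e := det_combo habc hv
  rw [det_self13, det_self23] at hd
  have hab : a = 0 ∧ b = 0 := by
    rcases mul_pos_iff.1 hxy with ⟨hx, hy⟩ | ⟨hx, hy⟩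
    · have h1 : a * det d e x = 0 := by nlinarith [mul_nonneg ha hx.le, mul_nonneg hb hy.le]
      have h2 : b * det d e y = 0 := by nlinarith [mul_nonneg ha hx.le, mul_nonneg hb hy.le]
      constructor
      · rcases mul_eq_zero.1 h1 with h | h; exact h; linarith
      · rcases mul_eq_zero.1 h2 with h | h; exact h; linarith
    · have h1 : a * det d e x = 0 := by nlinarith [mul_nonneg ha (neg_nonneg.2 hx.le), mul_nonneg hb (neg_nonneg.2 hy.le)]
      have h2 : b * det d e y = 0 := by nlinarith [mul_nonneg ha (neg_nonneg.2 hx.le), mul_nonneg hb (neg_nonneg.2 hy.le)]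
      constructor
      · rcases mul_eq_zero.1 h1 with h | h; exact h; linarith
      · rcases mul_eq_zero.1 h2 with h | h; exact h; linarith
  obtain ⟨ha0, hb0⟩ := hab
  subst ha0; subst hb0
  have : c = 1 := by linarith
  subst this
  apply hde
  rw [← hv]; module

/-- Vertex lemma: a vertex of a nondegenerate triangle is not in the hull of
another vertex together with two points strictly inside the triangle. -/
lemma vertex_not_mem {p q r d e : Pt} (hD : det p q r ≠ 0)
    (hd : SIn d p q r) (he : SIn e p q r) (hpq : p ≠ q) :
    p ∉ convexHull ℝ ({q, d, e} : Set Pt) := by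
  intro hmem
  rw [mem_hull3] at hmem
  obtain ⟨l, m, n, hl, hm, hn, hlmn, hv⟩ := hmem
  obtain ⟨a1, a2, a3, ha1, ha2, ha3, has, hav⟩ := hd
  obtain ⟨b1, b2, b3, hb1, hb2, hb3, hbs, hbv⟩ := he
  -- p = (m a1 + n b1) p + (l + m a2 + n b2) q + (m a3 + n b3) r
  have hcomb : (m*a1 + n*b1 - 1) • p + (l + m*a2 + n*b2) • q + (m*a3 + n*b3) • r = (0 : Pt) := by
    rw [← hav, ← hbv] at hv
    linear_combination (norm := module) hv
  have hsum : (m*a1 + n*b1 - 1) + (l + m*a2 + n*b2) + (m*a3 + n*b3) = 0 := by nlinarith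
  obtain ⟨e1, e2, e3⟩ := bary_unique hD hsum hcomb
  have hm0 : m = 0 := by nlinarith
  have hn0 : n = 0 := by nlinarith
  have : l = 1 := by linarith
  subst this; subst hm0; subst hn0
  apply hpq
  rw [← hv]; module

lemma ne_of_det12 {p q r : Pt} (hD : det p q r ≠ 0) : p ≠ q := by
  rintro rfl; exact hD (det_self12 p r)
lemma ne_of_det13 {p q r : Pt} (hD : det p q r ≠ 0) : p ≠ r := by
  rintro rfl; exact hD (det_self13 p q)
lemma ne_of_det23 {p q r : Pt} (hD : det p q r ≠ 0) : q ≠ r := by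
  rintro rfl; exact hD (det_self23 p q)
lemma coe_quad (x y d e : Pt) :
    (({x, y, d, e} : Finset Pt) : Set Pt) = ({x, y, d, e} : Set Pt) := by simp

lemma lemB0 {p q r d e : Pt} (hD : det p q r ≠ 0) (hde : d ≠ e)
    (hxy : det d e p * det d e q > 0)
    (hd : SIn d p q r) (he : SIn e p q r) :
    ConvexPos ({p, q, d, e} : Finset Pt) ∧ ({p, q, d, e} : Finset Pt).card = 4 := by
  have hfp : det d e p ≠ 0 := by intro h; rw [h] at hxy; simp at hxy
  have hfq : det d e q ≠ 0 := by intro h; rw [h] at hxy; simp at hxy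
  have hpq : p ≠ q := ne_of_det12 hD
  have hdp : d ≠ p := by rintro rfl; exact hfp (det_self13 d e)
  have hdq : d ≠ q := by rintro rfl; exact hfq (det_self13 d e)
  have hep : e ≠ p := by rintro rfl; exact hfp (det_self23 d e)
  have heq : e ≠ q := by rintro rfl; exact hfq (det_self23 d e)
  have herase1 : ((({p, q, d, e} : Finset Pt).erase p : Finset Pt) : Set Pt) = ({q, d, e} : Set Pt) := by
    ext w
    simp only [Finset.coe_erase, Set.mem_diff, Finset.coe_insert, Finset.coe_singleton,
      Set.mem_insert_iff, Set.mem_singleton_iff]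
    constructor
    · rintro ⟨h1, h2⟩
      rcases h1 with rfl | h1
      · exact absurd rfl h2
      · exact h1
    · rintro h
      refine ⟨Or.inr h, ?_⟩
      rintro rfl
      rcases h with rfl | rfl | rfl
      · exact hpq rfl
      · exact hdp rfl
      · exact hep rfl
  have herase2 : ((({p, q, d, e} : Finset Pt).erase q : Finset Pt) : Set Pt) = ({p, d, e} : Set Pt) := by
    ext w
    simp only [Finset.coe_erase, Set.mem_diff, Finset.coe_insert, Finset.coe_singleton,
      Set.mem_insert_iff, Set.mem_singleton_iff]
    constructor
    · rintro ⟨h1, h2⟩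
      rcases h1 with rfl | rfl | h1
      · exact Or.inl rfl
      · exact absurd rfl h2
      · exact Or.inr h1
    · rintro h
      constructor
      · rcases h with rfl | h
        · exact Or.inl rfl
        · exact Or.inr (Or.inr h)
      · rintro rfl
        rcases h with rfl | rfl | rfl
        · exact hpq rfl
        · exact hdq rfl
        · exact heq rfl
  have herase3 : ((({p, q, d, e} : Finset Pt).erase d : Finset Pt) : Set Pt) = ({p, q, e} : Set Pt) := by
    ext w
    simp only [Finset.coe_erase, Set.mem_diff, Finset.coe_insert, Finset.coe_singleton,
      Set.mem_insert_iff, Set.mem_singleton_iff]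
    constructor
    · rintro ⟨h1, h2⟩
      rcases h1 with rfl | rfl | rfl | h1
      · exact Or.inl rfl
      · exact Or.inr (Or.inl rfl)
      · exact absurd rfl h2
      · exact Or.inr (Or.inr h1)
    · rintro h
      constructor
      · rcases h with rfl | rfl | rfl
        · exact Or.inl rfl
        · exact Or.inr (Or.inl rfl)
        · exact Or.inr (Or.inr (Or.inr rfl))
      · rintro rfl
        rcases h with rfl | rfl | rfl
        · exact hdp rfl
        · exact hdq rfl
        · exact hde rfl
  have herase4 : ((({p, q, d, e} : Finset Pt).erase e : Finset Pt) : Set Pt) = ({p, q, d} : Set Pt) := by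
    ext w
    simp only [Finset.coe_erase, Set.mem_diff, Finset.coe_insert, Finset.coe_singleton,
      Set.mem_insert_iff, Set.mem_singleton_iff]
    constructor
    · rintro ⟨h1, h2⟩
      rcases h1 with rfl | rfl | rfl | h1
      · exact Or.inl rfl
      · exact Or.inr (Or.inl rfl)
      · exact Or.inr (Or.inr rfl)
      · exact absurd h1 h2
    · rintro h
      constructor
      · rcases h with rfl | rfl | rfl
        · exact Or.inl rfl
        · exact Or.inr (Or.inl rfl)
        · exact Or.inr (Or.inr (Or.inl rfl))
      · rintro rfl
        rcases h with rfl | rfl | rfl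
        · exact hep rfl
        · exact heq rfl
        · exact hde.symm rfl
  have hP1 : p ∉ convexHull ℝ ({q, d, e} : Set Pt) := vertex_not_mem hD hd he hpq
  have hP2 : q ∉ convexHull ℝ ({p, d, e} : Set Pt) :=
    vertex_not_mem (by rw [show det q p r = - det p q r from by unfold det; ring]; simpa using hD)
      (SIn_swap12 hd) (SIn_swap12 he) (Ne.symm hpq)
  have hP3 : d ∉ convexHull ℝ ({p, q, e} : Set Pt) := line_not_mem hde hxy
  have hP4 : e ∉ convexHull ℝ ({p, q, d} : Set Pt) := by
    have hxy' : det e d p * det e d q > 0 := by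
      rw [show det e d p = - det d e p from by unfold det; ring,
        show det e d q = - det d e q from by unfold det; ring]
      nlinarith
    exact line_not_mem (Ne.symm hde) hxy'
  constructor
  · intro z hz
    simp only [Finset.mem_insert, Finset.mem_singleton] at hz
    rcases hz with rfl | rfl | rfl | rfl
    · rw [herase1]; exact hP1
    · rw [herase2]; exact hP2
    · rw [herase3]; exact hP3
    · rw [herase4]; exact hP4
  · rw [Finset.card_insert_of_notMem (by simp [hpq, hdp.symm, hep.symm]),
      Finset.card_insert_of_notMem (by simp [hdq.symm, heq.symm]),
      Finset.card_insert_of_notMem (by simp [hde]),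
      Finset.card_singleton]
lemma pigeon {x y z : ℝ} (hx : x ≠ 0) (hy : y ≠ 0) (hz : z ≠ 0) :
    x * y > 0 ∨ x * z > 0 ∨ y * z > 0 := by
  rcases hx.lt_or_gt with hx | hx <;> rcases hy.lt_or_gt with hy | hy <;>
    rcases hz.lt_or_gt with hz | hz <;>
    first
      | exact Or.inl (by nlinarith)
      | exact Or.inr (Or.inl (by nlinarith))
      | exact Or.inr (Or.inr (by nlinarith))

lemma lemB {p q r d e : Pt} (hD : det p q r ≠ 0) (hde : d ≠ e)
    (h1 : det d e p ≠ 0) (h2 : det d e q ≠ 0) (h3 : det d e r ≠ 0)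
    (hd : SIn d p q r) (he : SIn e p q r) :
    ∃ x y : Pt, (x = p ∨ x = q ∨ x = r) ∧ (y = p ∨ y = q ∨ y = r) ∧
      ConvexPos ({x, y, d, e} : Finset Pt) ∧ ({x, y, d, e} : Finset Pt).card = 4 := by
  rcases pigeon h1 h2 h3 with h | h | h
  · exact ⟨p, q, Or.inl rfl, Or.inr (Or.inl rfl), lemB0 hD hde h hd he⟩
  · refine ⟨p, r, Or.inl rfl, Or.inr (Or.inr rfl), ?_⟩
    have hD' : det p r q ≠ 0 := by
      rw [show det p r q = - det p q r from by unfold det; ring]; simpa using hD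
    exact lemB0 hD' hde h (SIn_swap23 hd) (SIn_swap23 he)
  · refine ⟨q, r, Or.inr (Or.inl rfl), Or.inr (Or.inr rfl), ?_⟩
    have hD' : det q r p ≠ 0 := by
      rw [show det q r p = det p q r from by unfold det; ring]; exact hD
    exact lemB0 hD' hde h (SIn_rot hd) (SIn_rot he)
lemma det_zero_of_combo {b c : ℝ} {q r z : Pt} (hbc : b + c = 1) (h : b • q + c • r = z) :
    det q r z = 0 := by
  have h1 : b * q.1 + c * r.1 = z.1 := by rw [← h]; simp
  have h2 : b * q.2 + c * r.2 = z.2 := by rw [← h]; simp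
  have hc : c = 1 - b := by linarith
  subst hc
  unfold det
  rw [← h1, ← h2]
  ring

lemma inside_or_SIn {z x y w : Pt} (hz : z ∈ convexHull ℝ ({x, y, w} : Set Pt))
    (hA : det y w z ≠ 0) (hB : det x w z ≠ 0) (hC : det x y z ≠ 0) : SIn z x y w := by
  rw [mem_hull3] at hz
  obtain ⟨a, b, c, ha, hb, hc, habc, hv⟩ := hz
  rcases ha.lt_or_eq with ha' | ha'
  · rcases hb.lt_or_eq with hb' | hb'
    · rcases hc.lt_or_eq with hc' | hc'
      · exact ⟨a, b, c, ha', hb', hc', habc, hv⟩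
      · exfalso; apply hC
        apply det_zero_of_combo (b := a) (c := b) (by linarith)
        rw [← hv, ← hc']; module
    · exfalso; apply hB
      apply det_zero_of_combo (b := a) (c := c) (by linarith)
      rw [← hv, ← hb']; module
  · exfalso; apply hA
    apply det_zero_of_combo (b := b) (c := c) (by linarith)
    rw [← hv, ← ha']; module

lemma coe_erase4 {a b c d : Pt} (h1 : b ≠ a) (h2 : c ≠ a) (h3 : d ≠ a) :
    ((({a, b, c, d} : Finset Pt).erase a : Finset Pt) : Set Pt) = ({b, c, d} : Set Pt) := by
  ext w
  simp only [Finset.coe_erase, Set.mem_diff, Finset.coe_insert, Finset.coe_singleton,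
    Set.mem_insert_iff, Set.mem_singleton_iff]
  constructor
  · rintro ⟨h, hne⟩
    rcases h with rfl | h
    · exact absurd rfl hne
    · exact h
  · rintro h
    refine ⟨Or.inr h, ?_⟩
    rintro rfl
    rcases h with rfl | rfl | rfl
    · exact h1 rfl
    · exact h2 rfl
    · exact h3 rfl

lemma lemC {u1 u2 u3 u4 : Pt} (hA : det u1 u2 u3 ≠ 0) (hB : det u1 u2 u4 ≠ 0)
    (hC : det u1 u3 u4 ≠ 0) (hD : det u2 u3 u4 ≠ 0) :
    (ConvexPos ({u1, u2, u3, u4} : Finset Pt) ∧ ({u1, u2, u3, u4} : Finset Pt).card = 4) ∨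
      SIn u4 u1 u2 u3 ∨ SIn u3 u1 u2 u4 ∨ SIn u2 u1 u3 u4 ∨ SIn u1 u2 u3 u4 := by
  have h12 : u1 ≠ u2 := ne_of_det12 hA
  have h13 : u1 ≠ u3 := ne_of_det13 hA
  have h14 : u1 ≠ u4 := ne_of_det13 hB
  have h23 : u2 ≠ u3 := ne_of_det23 hA
  have h24 : u2 ≠ u4 := ne_of_det23 hB
  have h34 : u3 ≠ u4 := ne_of_det23 hC
  by_cases hconv : ConvexPos ({u1, u2, u3, u4} : Finset Pt)
  · left
    refine ⟨hconv, ?_⟩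
    rw [Finset.card_insert_of_notMem (by simp [h12, h13, h14]),
      Finset.card_insert_of_notMem (by simp [h23, h24]),
      Finset.card_insert_of_notMem (by simp [h34]),
      Finset.card_singleton]
  · right
    unfold ConvexPos at hconv
    push_neg at hconv
    obtain ⟨z, hzmem, hzin⟩ := hconv
    simp only [Finset.mem_insert, Finset.mem_singleton] at hzmem
    rcases hzmem with h | h | h | h <;> rw [h] at hzin
    · -- z = u1
      rw [coe_erase4 h12.symm h13.symm h14.symm] at hzin
      refine Or.inr (Or.inr (Or.inr (inside_or_SIn hzin ?_ ?_ ?_)))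
      · intro h0; exact hC (by unfold det at h0 ⊢; linarith)
      · intro h0; exact hB (by unfold det at h0 ⊢; linarith)
      · intro h0; exact hA (by unfold det at h0 ⊢; linarith)
    · -- z = u2
      rw [show ({u1, u2, u3, u4} : Finset Pt) = {u2, u1, u3, u4} from Finset.insert_comm u1 u2 _,
        coe_erase4 h12 h23.symm h24.symm] at hzin
      refine Or.inr (Or.inr (Or.inl (inside_or_SIn hzin ?_ ?_ ?_)))
      · intro h0; exact hD (by unfold det at h0 ⊢; linarith)
      · intro h0; exact hB (by unfold det at h0 ⊢; linarith)
      · intro h0; exact hA (by unfold det at h0 ⊢; linarith)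
    · -- z = u3
      rw [show ({u1, u2, u3, u4} : Finset Pt) = {u3, u1, u2, u4} from by
          rw [Finset.insert_comm u2 u3, Finset.insert_comm u1 u3],
        coe_erase4 h13 h23 h34.symm] at hzin
      refine Or.inr (Or.inl (inside_or_SIn hzin ?_ ?_ ?_))
      · intro h0; exact hD (by unfold det at h0 ⊢; linarith)
      · intro h0; exact hC (by unfold det at h0 ⊢; linarith)
      · intro h0; exact hA (by unfold det at h0 ⊢; linarith)
    · -- z = u4
      rw [show ({u1, u2, u3, u4} : Finset Pt) = {u4, u1, u2, u3} from by
          rw [Finset.pair_comm u3 u4, Finset.insert_comm u2 u4, Finset.insert_comm u1 u4],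
        coe_erase4 h14 h24 h34] at hzin
      refine Or.inl (inside_or_SIn hzin ?_ ?_ ?_)
      · intro h0; exact hD (by unfold det at h0 ⊢; linarith)
      · intro h0; exact hC (by unfold det at h0 ⊢; linarith)
      · intro h0; exact hB (by unfold det at h0 ⊢; linarith)
lemma pack {P : Finset Pt} {x y d e : Pt} (hx : x ∈ P) (hy : y ∈ P) (hd : d ∈ P) (he : e ∈ P)
    (h : ConvexPos ({x, y, d, e} : Finset Pt) ∧ ({x, y, d, e} : Finset Pt).card = 4) :
    ∃ Q ⊆ P, Q.card = 4 ∧ ConvexPos Q :=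
  ⟨{x, y, d, e}, by
    rw [Finset.insert_subset_iff, Finset.insert_subset_iff, Finset.insert_subset_iff,
      Finset.singleton_subset_iff]
    exact ⟨hx, hy, hd, he⟩, h.2, h.1⟩

lemma helper2 {P : Finset Pt} {p1 p2 p3 dd ee : Pt}
    (m1 : p1 ∈ P) (m2 : p2 ∈ P) (m3 : p3 ∈ P) (md : dd ∈ P) (me : ee ∈ P)
    (hdet : ∀ p ∈ P, ∀ q ∈ P, ∀ r ∈ P, p ≠ q → p ≠ r → q ≠ r → det p q r ≠ 0)
    (n12 : p1 ≠ p2) (n13 : p1 ≠ p3) (n1d : p1 ≠ dd) (n1e : p1 ≠ ee)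
    (n23 : p2 ≠ p3) (n2d : p2 ≠ dd) (n2e : p2 ≠ ee)
    (n3d : p3 ≠ dd) (n3e : p3 ≠ ee) (nde : dd ≠ ee)
    (hd : SIn dd p1 p2 p3) :
    ∃ Q ⊆ P, Q.card = 4 ∧ ConvexPos Q := by
  have D123 : det p1 p2 p3 ≠ 0 := hdet p1 m1 p2 m2 p3 m3 n12 n13 n23
  have D12e : det p1 p2 ee ≠ 0 := hdet p1 m1 p2 m2 ee me n12 n1e n2e
  have D13e : det p1 p3 ee ≠ 0 := hdet p1 m1 p3 m3 ee me n13 n1e n3e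
  have D23e : det p2 p3 ee ≠ 0 := hdet p2 m2 p3 m3 ee me n23 n2e n3e
  rcases lemC D123 D12e D13e D23e with ⟨hcv, hcard⟩ | hS | hS | hS | hS
  · exact pack m1 m2 m3 me ⟨hcv, hcard⟩
  · -- ee inside triangle p1 p2 p3
    obtain ⟨x, y, hx, hy, hcv, hcard⟩ :=
      lemB D123 nde
        (hdet dd md ee me p1 m1 nde n1d.symm n1e.symm)
        (hdet dd md ee me p2 m2 nde n2d.symm n2e.symm)
        (hdet dd md ee me p3 m3 nde n3d.symm n3e.symm)
        hd hS
    refine pack ?_ ?_ md me ⟨hcv, hcard⟩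
    · rcases hx with rfl | rfl | rfl <;> assumption
    · rcases hy with rfl | rfl | rfl <;> assumption
  · -- p3 inside triangle p1 p2 ee ; interior points dd, p3 of triangle (p1,p2,ee)
    have hd' : SIn dd p1 p2 ee := SIn_subst hd hS
    obtain ⟨x, y, hx, hy, hcv, hcard⟩ :=
      lemB D12e n3d.symm
        (hdet dd md p3 m3 p1 m1 n3d.symm n1d.symm n13.symm)
        (hdet dd md p3 m3 p2 m2 n3d.symm n2d.symm n23.symm)
        (hdet dd md p3 m3 ee me n3d.symm nde n3e)
        hd' hS
    refine pack ?_ ?_ md m3 ⟨hcv, hcard⟩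
    · rcases hx with rfl | rfl | rfl <;> assumption
    · rcases hy with rfl | rfl | rfl <;> assumption
  · -- p2 inside triangle p1 p3 ee
    have hd' : SIn dd p1 p3 ee := SIn_subst (SIn_swap23 hd) hS
    obtain ⟨x, y, hx, hy, hcv, hcard⟩ :=
      lemB D13e n2d.symm
        (hdet dd md p2 m2 p1 m1 n2d.symm n1d.symm n12.symm)
        (hdet dd md p2 m2 p3 m3 n2d.symm n3d.symm n23)
        (hdet dd md p2 m2 ee me n2d.symm nde n2e)
        hd' hS
    refine pack ?_ ?_ md m2 ⟨hcv, hcard⟩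
    · rcases hx with rfl | rfl | rfl <;> assumption
    · rcases hy with rfl | rfl | rfl <;> assumption
  · -- p1 inside triangle p2 p3 ee
    have hd' : SIn dd p2 p3 ee := SIn_subst (SIn_rot hd) hS
    obtain ⟨x, y, hx, hy, hcv, hcard⟩ :=
      lemB D23e n1d.symm
        (hdet dd md p1 m1 p2 m2 n1d.symm n2d.symm n12)
        (hdet dd md p1 m1 p3 m3 n1d.symm n3d.symm n13)
        (hdet dd md p1 m1 ee me n1d.symm nde n1e)
        hd' hS
    refine pack ?_ ?_ md m1 ⟨hcv, hcard⟩
    · rcases hx with rfl | rfl | rfl <;> assumption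
    · rcases hy with rfl | rfl | rfl <;> assumption


/-- Any 5 points in general position contain 4 points in convex position. -/
theorem stmt0 (P : Finset Pt) (hcard : P.card = 5) (hgp : GenPos P) :
    ∃ Q ⊆ P, Q.card = 4 ∧ ConvexPos Q := by
  have hdet : ∀ p ∈ P, ∀ q ∈ P, ∀ r ∈ P, p ≠ q → p ≠ r → q ≠ r → det p q r ≠ 0 := by
    intro p hp q hq r hr hpq hpr hqr h0
    exact hgp p hp q hq r hr hpq hpr hqr (collinear_of_det_eq_zero h0)
  -- extract five distinct points
  obtain ⟨a, ha⟩ : P.Nonempty := by rw [← Finset.card_pos]; omega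
  have hc1 : (P.erase a).card = 4 := by rw [Finset.card_erase_of_mem ha]; omega
  obtain ⟨b, hb⟩ : (P.erase a).Nonempty := by rw [← Finset.card_pos]; omega
  have hc2 : ((P.erase a).erase b).card = 3 := by rw [Finset.card_erase_of_mem hb]; omega
  obtain ⟨c, hc⟩ : ((P.erase a).erase b).Nonempty := by rw [← Finset.card_pos]; omega
  have hc3 : (((P.erase a).erase b).erase c).card = 2 := by rw [Finset.card_erase_of_mem hc]; omega
  obtain ⟨d, hd⟩ : (((P.erase a).erase b).erase c).Nonempty := by rw [← Finset.card_pos]; omega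
  have hc4 : ((((P.erase a).erase b).erase c).erase d).card = 1 := by
    rw [Finset.card_erase_of_mem hd]; omega
  obtain ⟨e, he⟩ : ((((P.erase a).erase b).erase c).erase d).Nonempty := by
    rw [← Finset.card_pos]; omega
  simp only [Finset.mem_erase] at hb hc hd he
  obtain ⟨nba, hb'⟩ := hb
  obtain ⟨ncb, nca, hc'⟩ := hc
  obtain ⟨ndc, ndb, nda, hd'⟩ := hd
  obtain ⟨ned, nec, neb, nea, he'⟩ := he
  have mb : b ∈ P := hb'
  have mc : c ∈ P := hc'
  have md : d ∈ P := hd'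
  have me : e ∈ P := he'
  -- apply lemC to (a, b, c, d)
  have Dabc : det a b c ≠ 0 := hdet a ha b mb c mc (Ne.symm nba) (Ne.symm nca) (Ne.symm ncb)
  have Dabd : det a b d ≠ 0 := hdet a ha b mb d md (Ne.symm nba) (Ne.symm nda) (Ne.symm ndb)
  have Dacd : det a c d ≠ 0 := hdet a ha c mc d md (Ne.symm nca) (Ne.symm nda) (Ne.symm ndc)
  have Dbcd : det b c d ≠ 0 := hdet b mb c mc d md (Ne.symm ncb) (Ne.symm ndb) (Ne.symm ndc)
  rcases lemC Dabc Dabd Dacd Dbcd with ⟨hcv, hcard4⟩ | hS | hS | hS | hS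
  · exact pack ha mb mc md ⟨hcv, hcard4⟩
  · -- d inside triangle a b c, fifth point e
    exact helper2 ha mb mc md me hdet nba.symm nca.symm nda.symm nea.symm
      ncb.symm ndb.symm neb.symm ndc.symm nec.symm ned.symm hS
  · -- c inside triangle a b d
    exact helper2 ha mb md mc me hdet nba.symm nda.symm nca.symm nea.symm
      ndb.symm ncb.symm neb.symm ndc ned.symm nec.symm hS
  · -- b inside triangle a c d
    exact helper2 ha mc md mb me hdet nca.symm nda.symm nba.symm nea.symm
      ndc.symm ncb nec.symm ndb ned.symm neb.symm hS
  · -- a inside triangle b c d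
    exact helper2 mb mc md ha me hdet ncb.symm ndb.symm nba neb.symm
      ndc.symm nca nec.symm nda ned.symm nea.symm hS
end
end

section
/- Let T be a triangle and consider its I-regions (the exterior region beyond each vertex, bounded by the extensions of the two incident sides) for a 6-point set of convex layer type (3,3). If an I-region of the inner triangle contains 3 of the outer points, then those outer points cannot form a triangle containing the inner triangle; hence in any (3,3) configuration no I-region contains 3 points. Formally: if ABC is a triangle and P, Q, R are three points all lying in the I-region at vertex A (the region of points X such that A lies in the interior of the convex hull of {X, B, C} — equivalently X is beyond A), then the triangle PQR does not contain the triangle ABC. -/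
open scoped Classical
noncomputable section

private lemma det_affine (B C y z : Pt) (a b : ℝ) (hab : a + b = 1) :
    det B C (a • y + b • z) = a * det B C y + b * det B C z := by
  simp only [det, Prod.fst_add, Prod.snd_add, Prod.smul_fst, Prod.smul_snd, smul_eq_mul]
  have : a = 1 - b := by linarith
  subst this; ring

private lemma convex_det_le (B C : Pt) (c m : ℝ) :
    Convex ℝ {y : Pt | c * det B C y ≤ m} := by
  intro y hy z hz a b ha hb hab
  simp only [Set.mem_setOf_eq] at *
  rw [det_affine B C y z a b hab]
  calc c * (a * det B C y + b * det B C z) = a * (c * det B C y) + b * (c * det B C z) := by ring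
    _ ≤ a * m + b * m :=
        add_le_add (mul_le_mul_of_nonneg_left hy ha) (mul_le_mul_of_nonneg_left hz hb)
    _ = m := by rw [← add_mul, hab, one_mul]

private lemma convex_det_ge (B C : Pt) (c m : ℝ) :
    Convex ℝ {y : Pt | m ≤ c * det B C y} := by
  intro y hy z hz a b ha hb hab
  simp only [Set.mem_setOf_eq] at *
  rw [det_affine B C y z a b hab]
  calc m = a * m + b * m := by rw [← add_mul, hab, one_mul]
    _ ≤ a * (c * det B C y) + b * (c * det B C z) :=
        add_le_add (mul_le_mul_of_nonneg_left hy ha) (mul_le_mul_of_nonneg_left hz hb)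
    _ = c * (a * det B C y + b * det B C z) := by ring

private lemma det_ne_zero_of_not_collinear {A B C : Pt}
    (h : ¬ Collinear ℝ ({A, B, C} : Set Pt)) : det B C A ≠ 0 := by
  intro hd
  apply h
  by_cases hBC : B = C
  · subst hBC
    have he : ({A, B, B} : Set Pt) = {A, B} := by simp
    rw [he]; exact collinear_pair ℝ A B
  · rw [collinear_iff_of_mem (show B ∈ ({A, B, C} : Set Pt) by simp)]
    refine ⟨C - B, ?_⟩
    intro p hp
    rcases hp with rfl | rfl | rfl
    · -- here `p` is the point A (renamed), satisfying det B C p = 0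
      simp only [det] at hd
      by_cases h1 : C.1 - B.1 = 0
      · have h2 : C.2 - B.2 ≠ 0 := by
          intro h2; exact hBC (Prod.ext (by linarith) (by linarith)).symm
        have hp1 : p.1 - B.1 = 0 := by
          rw [h1] at hd
          rcases mul_eq_zero.mp (by linarith : (C.2 - B.2) * (p.1 - B.1) = 0) with h | h
          · exact absurd h h2
          · exact h
        refine ⟨(p.2 - B.2) / (C.2 - B.2), ?_⟩
        rw [vadd_eq_add]
        apply Prod.ext
        · simp only [Prod.fst_add, Prod.smul_fst, Prod.fst_sub, smul_eq_mul]
          rw [h1]; ring_nf; linarith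
        · simp only [Prod.snd_add, Prod.smul_snd, Prod.snd_sub, smul_eq_mul]
          field_simp
          ring
      · refine ⟨(p.1 - B.1) / (C.1 - B.1), ?_⟩
        rw [vadd_eq_add]
        apply Prod.ext
        · simp only [Prod.fst_add, Prod.smul_fst, Prod.fst_sub, smul_eq_mul]
          field_simp
          ring
        · simp only [Prod.snd_add, Prod.smul_snd, Prod.snd_sub, smul_eq_mul]
          field_simp
          nlinarith [hd]
    · exact ⟨0, by simp⟩
    · exact ⟨1, by simp⟩

/-- Three points in a single I-region of a triangle cannot have the triangle
contained in their convex hull. -/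
theorem stmt14 (A B C P Q R : Pt) (habc : ¬ Collinear ℝ ({A, B, C} : Set Pt))
    (hP : P ∈ IRegion A ({B, C} : Set Pt))
    (hQ : Q ∈ IRegion A ({B, C} : Set Pt))
    (hR : R ∈ IRegion A ({B, C} : Set Pt)) :
    ¬ (convexHull ℝ ({A, B, C} : Set Pt) ⊆ convexHull ℝ ({P, Q, R} : Set Pt)) := by
  intro hsub
  set d : ℝ := det B C A with hd_def
  have hd : d ≠ 0 := det_ne_zero_of_not_collinear habc
  have hd2 : 0 < d ^ 2 := by positivity
  have hBC : B ≠ C := by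
    intro h; apply habc
    subst h
    have he : ({A, B, B} : Set Pt) = {A, B} := by simp
    rw [he]; exact collinear_pair ℝ A B
  set n : ℝ := (C.1 - B.1) ^ 2 + (C.2 - B.2) ^ 2 with hn_def
  have hn : 0 < n := by
    rcases lt_or_eq_of_le (show (0:ℝ) ≤ n from by positivity) with h | h
    · exact h
    · exfalso; apply hBC
      have h1 : C.1 - B.1 = 0 := by nlinarith [sq_nonneg (C.1 - B.1), sq_nonneg (C.2 - B.2)]
      have h2 : C.2 - B.2 = 0 := by nlinarith [sq_nonneg (C.1 - B.1), sq_nonneg (C.2 - B.2)]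
      exact (Prod.ext (by linarith) (by linarith)).symm
  set v : Pt := (-(d * (C.2 - B.2)), d * (C.1 - B.1)) with hv_def
  have key : ∀ X : Pt, A ∈ interior (convexHull ℝ ({X, B, C} : Set Pt)) →
      d ^ 2 < d * det B C X := by
    intro X hX
    have hcont : Filter.Tendsto (fun t : ℝ => A + t • v) (nhds 0) (nhds A) := by
      have hc : Continuous fun t : ℝ => A + t • v := by continuity
      have h0 : A + (0 : ℝ) • v = A := by simp
      simpa [h0] using hc.tendsto 0
    have hnhds : convexHull ℝ ({X, B, C} : Set Pt) ∈ nhds A :=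
      mem_interior_iff_mem_nhds.mp hX
    have hev : ∀ᶠ t in nhds (0 : ℝ), A + t • v ∈ convexHull ℝ ({X, B, C} : Set Pt) :=
      hcont.eventually hnhds
    have hev' : ∀ᶠ t in nhdsWithin (0 : ℝ) (Set.Ioi 0),
        A + t • v ∈ convexHull ℝ ({X, B, C} : Set Pt) ∧ 0 < t :=
      (hev.filter_mono nhdsWithin_le_nhds).and
        (eventually_mem_nhdsWithin.mono fun t ht => ht)
    obtain ⟨t, htmem, htpos⟩ := hev'.exists
    set M : ℝ := max (d * det B C X) 0 with hM_def
    have hsub2 : convexHull ℝ ({X, B, C} : Set Pt) ⊆ {y : Pt | d * det B C y ≤ M} := by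
      apply convexHull_min _ (convex_det_le B C d M)
      intro p hp
      rcases hp with rfl | rfl | rfl
      · show d * det B C p ≤ M
        exact le_max_left _ _
      · simp only [Set.mem_setOf_eq, det]
        have he : (C.1 - p.1) * (p.2 - p.2) - (C.2 - p.2) * (p.1 - p.1) = 0 := by ring
        rw [he, mul_zero]; exact le_max_right _ _
      · simp only [Set.mem_setOf_eq, det]
        have he : (p.1 - B.1) * (p.2 - B.2) - (p.2 - B.2) * (p.1 - B.1) = 0 := by ring
        rw [he, mul_zero]; exact le_max_right _ _
    have hval : d * det B C (A + t • v) = d ^ 2 + t * (d ^ 2 * n) := by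
      simp only [det, Prod.fst_add, Prod.snd_add, Prod.smul_fst, Prod.smul_snd,
        smul_eq_mul, hv_def, hn_def, hd_def]
      ring
    have h1 : d * det B C (A + t • v) ≤ M := hsub2 htmem
    have h2 : d ^ 2 < d * det B C (A + t • v) := by
      rw [hval]
      nlinarith [mul_pos htpos (mul_pos hd2 hn)]
    have h3 : d ^ 2 < M := lt_of_lt_of_le h2 h1
    rcases le_or_gt (d * det B C X) 0 with h | h
    · exfalso
      have hM0 : M = 0 := max_eq_right h
      rw [hM0] at h3; linarith
    · have hM1 : M = d * det B C X := max_eq_left (le_of_lt h)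
      rwa [hM1] at h3
  have kP := key P hP
  have kQ := key Q hQ
  have kR := key R hR
  set m : ℝ := min (d * det B C P) (min (d * det B C Q) (d * det B C R)) with hm_def
  have hmin : convexHull ℝ ({P, Q, R} : Set Pt) ⊆ {y : Pt | m ≤ d * det B C y} := by
    apply convexHull_min _ (convex_det_ge B C d m)
    intro p hp
    rcases hp with rfl | rfl | rfl
    · show m ≤ d * det B C p
      exact min_le_left _ _
    · show m ≤ d * det B C p
      exact le_trans (min_le_right _ _) (min_le_left _ _)
    · show m ≤ d * det B C p
      exact le_trans (min_le_right _ _) (min_le_right _ _)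
  have hA : A ∈ convexHull ℝ ({P, Q, R} : Set Pt) :=
    hsub (subset_convexHull ℝ _ (by simp))
  have hAm : m ≤ d * det B C A := hmin hA
  have hlt : d ^ 2 < m := lt_min kP (lt_min kQ kR)
  have hdd : d * det B C A = d ^ 2 := by rw [← hd_def]; ring
  rw [hdd] at hAm
  linarith
end
end
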